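/- For battery capacities beyond the total load energy, the set of suitable starting times saturates: if E_bat ≥ Σ_{t'=0}^{T_a - 1} a(t')·Δt and a(t') ≥ 0 with P_wind ≥ 0, then the set of suitable starting times is the same as with infinite capacity (no cap), i.e., increasing E_bat further does not change suitability. -/

import Mathlib

/-- Capped battery level at time `ts + k`. -/
def batt (Pwind a : ℕ → ℝ) (Δt Ebat : ℝ) (ts : ℕ) : ℕ → ℝ
  | 0 => 0
  | k + 1 => min (batt Pwind a Δt Ebat ts k + (Pwind (ts + k) - a k) * Δt) Ebat

/-- Uncapped (infinite-capacity) battery level at time `ts + k`. -/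
def battInf (Pwind a : ℕ → ℝ) (Δt : ℝ) (ts : ℕ) : ℕ → ℝ
  | 0 => 0
  | k + 1 => battInf Pwind a Δt ts k + (Pwind (ts + k) - a k) * Δt

/-!
The cap only ever cuts off surplus wind energy, so the capped level never exceeds the uncapped
one. Conversely, once the cap has cut, the battery is full and from then on it can lose at most
the load energy still to come; hence after `k` steps it holds at least
`min (battInf k) (E_bat - ∑_{t' < k} a t' Δt)`. If `E_bat` exceeds the total load energy, the
second term is nonnegative on the whole window, so the capped level is nonnegative wherever the
uncapped one is.
-/

open Finset

section BatteryLevel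

variable (Pwind a : ℕ → ℝ) (Δt Ebat : ℝ) (ts : ℕ)

lemma batt_le_battInf (k : ℕ) : batt Pwind a Δt Ebat ts k ≤ battInf Pwind a Δt ts k := by
  induction k with
  | zero => simp [batt, battInf]
  | succ n ih =>
    simp only [batt, battInf]
    exact (min_le_left _ _).trans (by linarith)

variable {Pwind a Δt}

lemma min_battInf_sub_loadEnergy_le_batt (hΔt : 0 ≤ Δt) (hwind : ∀ t, 0 ≤ Pwind t)
    (ha : ∀ t', 0 ≤ a t') (k : ℕ) :
    min (battInf Pwind a Δt ts k) (Ebat - ∑ t' ∈ range k, a t' * Δt) ≤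
      batt Pwind a Δt Ebat ts k := by
  induction k with
  | zero => simp [batt, battInf]
  | succ n ih =>
    have hload : 0 ≤ ∑ t' ∈ range (n + 1), a t' * Δt :=
      sum_nonneg fun i _ => mul_nonneg (ha i) hΔt
    have hgain : 0 ≤ Pwind (ts + n) * Δt := mul_nonneg (hwind _) hΔt
    simp only [batt, battInf]
    rw [sum_range_succ] at hload ⊢
    refine le_min ?_ ((min_le_right _ _).trans (by linarith))
    set d := (Pwind (ts + n) - a n) * Δt
    calc min (battInf Pwind a Δt ts n + d) (Ebat - (∑ t' ∈ range n, a t' * Δt + a n * Δt))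
        ≤ min (battInf Pwind a Δt ts n + d) (Ebat - ∑ t' ∈ range n, a t' * Δt + d) :=
          min_le_min_left _ (by simp only [d]; linarith)
      _ = min (battInf Pwind a Δt ts n) (Ebat - ∑ t' ∈ range n, a t' * Δt) + d :=
          min_add_add_right _ _ _
      _ ≤ batt Pwind a Δt Ebat ts n + d := by linarith

end BatteryLevel

theorem stmt_19_general (Pwind a : ℕ → ℝ) (Δt Ebat : ℝ) (hΔt : 0 < Δt) (Ta : ℕ)
    (hwind : ∀ t, 0 ≤ Pwind t) (ha : ∀ t', 0 ≤ a t')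
    (hEbat : ∑ t' ∈ Finset.range Ta, a t' * Δt ≤ Ebat) (ts : ℕ) :
    ((∀ k ≤ Ta, 0 ≤ batt Pwind a Δt Ebat ts k) ↔
      (∀ k ≤ Ta, 0 ≤ battInf Pwind a Δt ts k)) := by
  refine ⟨fun h k hk => (h k hk).trans (batt_le_battInf Pwind a Δt Ebat ts k), fun h k hk => ?_⟩
  have hload : ∑ t' ∈ range k, a t' * Δt ≤ ∑ t' ∈ range Ta, a t' * Δt :=
    sum_le_sum_of_subset_of_nonneg (range_subset_range.2 hk)
      fun i _ _ => mul_nonneg (ha i) hΔt.le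
  exact (le_min (h k hk) (by linarith)).trans
    (min_battInf_sub_loadEnergy_le_batt Ebat ts hΔt.le hwind ha k)

/-- Once the capacity exceeds the total load energy, suitability is the same
as with infinite capacity: increasing the battery further changes nothing. -/
theorem stmt_19 (Pwind a : ℕ → ℝ) (Δt Ebat : ℝ) (hΔt : 0 < Δt) (Ta : ℕ)
    (hwind : ∀ t, 0 ≤ Pwind t) (ha : ∀ t', 0 ≤ a t')
    (hsupp : ∀ t', Ta ≤ t' → a t' = 0)
    (hEbat : ∑ t' ∈ Finset.range Ta, a t' * Δt ≤ Ebat) (ts : ℕ) :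
    ((∀ k ≤ Ta, 0 ≤ batt Pwind a Δt Ebat ts k) ↔
      (∀ k ≤ Ta, 0 ≤ battInf Pwind a Δt ts k)) :=
  stmt_19_general Pwind a Δt Ebat hΔt Ta hwind ha hEbat ts
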